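/- Let T ∈ L(X) and let F ∈ L(X) be a finite rank operator commuting with T. Then σ_gD(T + F) = σ_gD(T). -/

import Mathlib

open Filter Set ContinuousLinearMap

noncomputable section

namespace PBW

variable {X : Type*} [NormedAddCommGroup X] [NormedSpace ℂ X]

/-- Restriction of an operator to an invariant subspace, as a continuous linear map. -/
def restrictOp (T : X →L[ℂ] X) (U : Submodule ℂ X) (h : ∀ x ∈ U, T x ∈ U) : U →L[ℂ] U :=
  ⟨(T : X →ₗ[ℂ] X).restrict h,
    (T.continuous.comp continuous_subtype_val).subtype_mk _⟩

/-- A quasi-nilpotent operator: its spectrum is contained in `{0}`. -/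
def IsQuasinilpotentOp {Z : Type*} [NormedAddCommGroup Z] [NormedSpace ℂ Z]
    (T : Z →L[ℂ] Z) : Prop := spectrum ℂ T ⊆ {0}

/-- A Weyl operator : Fredholm of index zero. -/
def IsWeylOp {Z : Type*} [NormedAddCommGroup Z] [NormedSpace ℂ Z]
    (T : Z →L[ℂ] Z) : Prop :=
  FiniteDimensional ℂ (LinearMap.ker (T : Z →ₗ[ℂ] Z)) ∧ IsClosed (LinearMap.range (T : Z →ₗ[ℂ] Z) : Set Z) ∧
    FiniteDimensional ℂ (Z ⧸ LinearMap.range (T : Z →ₗ[ℂ] Z)) ∧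
    Module.finrank ℂ (LinearMap.ker (T : Z →ₗ[ℂ] Z)) = Module.finrank ℂ (Z ⧸ LinearMap.range (T : Z →ₗ[ℂ] Z))

/-- A pseudo B-Weyl operator: direct sum of a Weyl operator and a quasi-nilpotent one. -/
def IsPseudoBWeyl (T : X →L[ℂ] X) : Prop :=
  ∃ (X₁ X₂ : Submodule ℂ X) (h₁ : ∀ x ∈ X₁, T x ∈ X₁) (h₂ : ∀ x ∈ X₂, T x ∈ X₂),
    IsClosed (X₁ : Set X) ∧ IsClosed (X₂ : Set X) ∧ IsCompl X₁ X₂ ∧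
    IsWeylOp (restrictOp T X₁ h₁) ∧ IsQuasinilpotentOp (restrictOp T X₂ h₂)

/-- A B-Weyl operator: direct sum of a Weyl operator and a nilpotent one. -/
def IsBWeyl (T : X →L[ℂ] X) : Prop :=
  ∃ (X₁ X₂ : Submodule ℂ X) (h₁ : ∀ x ∈ X₁, T x ∈ X₁) (h₂ : ∀ x ∈ X₂, T x ∈ X₂),
    IsClosed (X₁ : Set X) ∧ IsClosed (X₂ : Set X) ∧ IsCompl X₁ X₂ ∧
    IsWeylOp (restrictOp T X₁ h₁) ∧ IsNilpotent (restrictOp T X₂ h₂)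

/-- The pseudo B-Weyl spectrum. -/
def pBWSpectrum (T : X →L[ℂ] X) : Set ℂ := {l | ¬ IsPseudoBWeyl (T - l • 1)}

/-- The generalized Drazin spectrum: accumulation points of the spectrum. -/
def gDSpectrum (T : X →L[ℂ] X) : Set ℂ := {l | AccPt l (𝓟 (spectrum ℂ T))}

/-- SVEP at a point. -/
def HasSVEPAt (T : X →L[ℂ] X) (l : ℂ) : Prop :=
  ∀ U : Set ℂ, IsOpen U → l ∈ U → ∀ f : ℂ → X, AnalyticOnNhd ℂ f U →
    (∀ μ ∈ U, (T - μ • 1) (f μ) = 0) → ∀ μ ∈ U, f μ = 0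

/-- The set where `T` fails SVEP. -/
def svepFail (T : X →L[ℂ] X) : Set ℂ := {l | ¬ HasSVEPAt T l}

/-- The Banach space adjoint (dual operator) of `T`. -/
def dualOp (T : X →L[ℂ] X) :
    (X →L[ℂ] ℂ) →L[ℂ] (X →L[ℂ] ℂ) :=
  (ContinuousLinearMap.compL ℂ X X ℂ).flip T

/-- The left spectrum. -/
def leftSpectrum (T : X →L[ℂ] X) : Set ℂ :=
  {l | ¬ ∃ S : X →L[ℂ] X, S * (T - l • 1) = 1}

/-- The right spectrum. -/
def rightSpectrum (T : X →L[ℂ] X) : Set ℂ :=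
  {l | ¬ ∃ S : X →L[ℂ] X, (T - l • 1) * S = 1}

/-- The left generalized Drazin spectrum. -/
def lgDSpectrum (T : X →L[ℂ] X) : Set ℂ := {l | AccPt l (𝓟 (leftSpectrum T))}

/-- The right generalized Drazin spectrum. -/
def rgDSpectrum (T : X →L[ℂ] X) : Set ℂ := {l | AccPt l (𝓟 (rightSpectrum T))}

variable {Y : Type*} [NormedAddCommGroup Y] [NormedSpace ℂ Y]

/-- The upper triangular operator matrix `M_C` on `X × Y`. -/
def MC (A : X →L[ℂ] X) (B : Y →L[ℂ] Y) (C : Y →L[ℂ] X) : (X × Y) →L[ℂ] (X × Y) :=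
  (A.comp (ContinuousLinearMap.fst ℂ X Y) + C.comp (ContinuousLinearMap.snd ℂ X Y)).prod
    (B.comp (ContinuousLinearMap.snd ℂ X Y))

end PBW


namespace Stmt3Aux

variable {X : Type*} [NormedAddCommGroup X] [NormedSpace ℂ X]

/-- Finite sets have no accumulation points (T1). -/
lemma not_accPt_of_finite {x : ℂ} {C : Set ℂ} (hC : C.Finite) : ¬ AccPt x (𝓟 C) := by
  rw [accPt_iff_nhds]
  push_neg
  refine ⟨(C \ {x})ᶜ, ?_, ?_⟩
  · exact ((hC.subset diff_subset).isClosed).isOpen_compl.mem_nhds (by simp)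
  · intro y hy
    by_contra h
    exact hy.1 ⟨hy.2, h⟩

/-- The set of eigenvalues with eigenvector in the range of `F` is finite. -/
lemma finite_eig (T F : X →L[ℂ] X) (hF : FiniteDimensional ℂ (LinearMap.range (F : X →ₗ[ℂ] X)))
    (hc : Commute T F) :
    {μ : ℂ | ∃ x : X, x ≠ 0 ∧ x ∈ LinearMap.range (F : X →ₗ[ℂ] X) ∧ (T + F) x = μ • x}.Finite := by
  set M : Submodule ℂ X := LinearMap.range (F : X →ₗ[ℂ] X) with hM
  have hinv : ∀ x ∈ M, (T + F) x ∈ M := by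
    rintro x ⟨y, rfl⟩
    simp only [ContinuousLinearMap.add_apply]
    refine M.add_mem ?_ ⟨F y, rfl⟩
    refine ⟨T y, ?_⟩
    have := congrFun (congrArg DFunLike.coe hc.eq) y
    exact this.symm ▸ rfl
  set e : Module.End ℂ M := ((T + F : X →L[ℂ] X) : X →ₗ[ℂ] X).restrict hinv with he
  have hsub : {μ : ℂ | ∃ x : X, x ≠ 0 ∧ x ∈ M ∧ (T + F) x = μ • x}
      ⊆ {μ | e.HasEigenvalue μ} := by
    rintro μ ⟨x, hx0, hxM, hxe⟩
    refine Module.End.hasEigenvalue_of_hasEigenvector (x := ⟨x, hxM⟩) ⟨?_, ?_⟩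
    · rw [Module.End.mem_eigenspace_iff]
      apply Subtype.ext
      simpa [e, LinearMap.restrict_apply] using hxe
    · exact fun h => hx0 (congrArg Subtype.val h)
  exact Set.Finite.subset e.finite_hasEigenvalue hsub

variable [CompleteSpace X]

/-- Riesz: `1 - K` with `K` finite rank is invertible if injective. -/
lemma isUnit_one_sub (K : X →L[ℂ] X) (hK : FiniteDimensional ℂ (LinearMap.range (K : X →ₗ[ℂ] X)))
    (hinj : ∀ x : X, x = K x → x = 0) : IsUnit ((1 : X →L[ℂ] X) - K) := by
  rw [ContinuousLinearMap.isUnit_iff_bijective]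
  constructor
  · -- injective
    intro a b hab
    simp only [ContinuousLinearMap.sub_apply, ContinuousLinearMap.one_apply] at hab
    have h1 : (a - b) - K (a - b) = (a - K a) - (b - K b) := by rw [map_sub]; abel
    rw [hab, sub_self] at h1
    have := hinj (a - b) (sub_eq_zero.mp h1)
    exact sub_eq_zero.mp this
  · -- surjective
    set M : Submodule ℂ X := LinearMap.range (K : X →ₗ[ℂ] X) with hM
    have hMinv : ∀ x ∈ M, ((1 : X →L[ℂ] X) - K) x ∈ M := by
      rintro x ⟨y, rfl⟩
      simp only [ContinuousLinearMap.sub_apply, ContinuousLinearMap.one_apply]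
      exact M.sub_mem ⟨y, rfl⟩ ⟨K y, rfl⟩
    set g : M →ₗ[ℂ] M := (((1 : X →L[ℂ] X) - K) : X →ₗ[ℂ] X).restrict hMinv with hg
    have hginj : Function.Injective g := by
      intro a b hab
      have h0 : ((1 : X →L[ℂ] X) - K) (a : X) = ((1 : X →L[ℂ] X) - K) (b : X) :=
        congrArg Subtype.val hab
      have h1 : (a : X) - K a = (b : X) - K b := by
        simpa [ContinuousLinearMap.sub_apply] using h0
      have h2 : ((a : X) - b) - K ((a : X) - b) = ((a : X) - K a) - ((b : X) - K b) := by
        rw [map_sub]; abel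
      rw [h1, sub_self] at h2
      have := hinj ((a : X) - b) (sub_eq_zero.mp h2)
      exact Subtype.ext (sub_eq_zero.mp this)
    have hgsurj : Function.Surjective g :=
      (LinearMap.injective_iff_surjective_of_finrank_eq_finrank rfl).mp hginj
    intro y
    obtain ⟨m, hm⟩ := hgsurj ⟨K y, ⟨y, rfl⟩⟩
    have hm' : (m : X) - K m = K y := by
      have := congrArg Subtype.val hm
      simpa [g, LinearMap.restrict_apply, ContinuousLinearMap.sub_apply] using this
    refine ⟨y + m, ?_⟩
    simp only [ContinuousLinearMap.sub_apply, ContinuousLinearMap.one_apply, map_add]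
    rw [hm']
    abel

/-- Spectral points of `T + F` outside `σ(T)` are eigenvalues with eigenvector in range `F`. -/
lemma eig_mem_range (T F : X →L[ℂ] X) (hF : FiniteDimensional ℂ (LinearMap.range (F : X →ₗ[ℂ] X)))
    (hc : Commute T F) {μ : ℂ} (hμ : μ ∈ spectrum ℂ (T + F)) (hμ' : μ ∉ spectrum ℂ T) :
    ∃ x : X, x ≠ 0 ∧ x ∈ LinearMap.range (F : X →ₗ[ℂ] X) ∧ (T + F) x = μ • x := by
  rw [spectrum.notMem_iff] at hμ'
  obtain ⟨u, hu⟩ := hμ'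
  set R : X →L[ℂ] X := ↑u⁻¹ with hR
  set K : X →L[ℂ] X := R * F with hKdef
  have hrange : LinearMap.range (K : X →ₗ[ℂ] X) = (LinearMap.range (F : X →ₗ[ℂ] X)).map (R : X →ₗ[ℂ] X) := by
    ext y
    simp only [LinearMap.mem_range, Submodule.mem_map, ContinuousLinearMap.coe_coe]
    constructor
    · rintro ⟨z, rfl⟩; exact ⟨F z, ⟨z, rfl⟩, rfl⟩
    · rintro ⟨w, ⟨z, rfl⟩, rfl⟩; exact ⟨z, rfl⟩
  have hKfin : FiniteDimensional ℂ (LinearMap.range (K : X →ₗ[ℂ] X)) := by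
    rw [hrange]; infer_instance
  have hfact : algebraMap ℂ (X →L[ℂ] X) μ - (T + F) = ↑u * ((1 : X →L[ℂ] X) - K) := by
    have huK : (↑u : X →L[ℂ] X) * K = F := by
      rw [hKdef, ← mul_assoc, hR, u.mul_inv, one_mul]
    rw [mul_sub, mul_one, huK, hu, sub_sub]
  have hnotunit : ¬ IsUnit ((1 : X →L[ℂ] X) - K) := by
    intro h
    rw [spectrum.mem_iff] at hμ
    exact hμ (hfact ▸ (u.isUnit.mul h))
  have hfix : ¬ ∀ x : X, x = K x → x = 0 := fun h => hnotunit (isUnit_one_sub K hKfin h)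
  push_neg at hfix
  obtain ⟨x, hx1, hx2⟩ := hfix
  have hcomm1 : Commute (algebraMap ℂ (X →L[ℂ] X) μ - T) F :=
    (Commute.sub_left (Algebra.commutes μ F) hc)
  have hcommu : Commute (↑u : X →L[ℂ] X) F := hu ▸ hcomm1
  have hcommR : Commute R F := hcommu.units_inv_left
  refine ⟨x, hx2, ?_, ?_⟩
  · have hxF : x = F (R x) := by
      calc x = K x := hx1
      _ = (R * F) x := rfl
      _ = (F * R) x := by rw [hcommR.eq]
      _ = F (R x) := rfl
    exact ⟨R x, hxF.symm⟩
  · have h0 : ((1 : X →L[ℂ] X) - K) x = 0 := by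
      simp only [ContinuousLinearMap.sub_apply, ContinuousLinearMap.one_apply]
      rw [← hx1]; simp
    have h1 : (algebraMap ℂ (X →L[ℂ] X) μ - (T + F)) x = 0 := by
      rw [hfact]
      show (↑u : X →L[ℂ] X) (((1 : X →L[ℂ] X) - K) x) = 0
      rw [h0, map_zero]
    have h2 : μ • x - (T + F) x = 0 := by
      simpa [Algebra.algebraMap_eq_smul_one, ContinuousLinearMap.sub_apply] using h1
    exact (sub_eq_zero.mp h2).symm

/-- One inclusion of the perturbation theorem. -/
lemma gD_subset (T F : X →L[ℂ] X) (hF : FiniteDimensional ℂ (LinearMap.range (F : X →ₗ[ℂ] X)))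
    (hc : Commute T F) : PBW.gDSpectrum (T + F) ⊆ PBW.gDSpectrum T := by
  intro l hl
  by_contra hlT
  simp only [PBW.gDSpectrum, Set.mem_setOf_eq] at hl hlT
  rw [accPt_iff_nhds] at hlT
  push_neg at hlT
  obtain ⟨U, hU, hUl⟩ := hlT
  apply not_accPt_of_finite (finite_eig T F hF hc)
  rw [accPt_iff_nhds]
  intro V hV
  rw [accPt_iff_nhds] at hl
  obtain ⟨y, ⟨hyVU, hyspec⟩, hyne⟩ := hl (V ∩ U) (inter_mem hV hU)
  have hynotT : y ∉ spectrum ℂ T := fun h => hyne (hUl y ⟨hyVU.2, h⟩)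
  obtain ⟨x, hx⟩ := eig_mem_range T F hF hc hyspec hynotT
  exact ⟨y, ⟨hyVU.1, ⟨x, hx⟩⟩, hyne⟩

end Stmt3Aux

/-- the generalized Drazin spectrum is stable under commuting finite rank
perturbations. -/
theorem stmt3 {X : Type*} [NormedAddCommGroup X] [NormedSpace ℂ X] [CompleteSpace X]
    (T F : X →L[ℂ] X) (hF : FiniteDimensional ℂ (LinearMap.range (F : X →ₗ[ℂ] X)))
    (hc : Commute T F) : PBW.gDSpectrum (T + F) = PBW.gDSpectrum T := by
  apply Set.Subset.antisymm
  · exact Stmt3Aux.gD_subset T F hF hc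
  · have hrange : LinearMap.range ((-F : X →L[ℂ] X) : X →ₗ[ℂ] X) = LinearMap.range (F : X →ₗ[ℂ] X) := by
      ext y
      constructor
      · rintro ⟨z, rfl⟩; exact ⟨-z, by simp⟩
      · rintro ⟨z, rfl⟩; exact ⟨-z, by simp⟩
    have hF' : FiniteDimensional ℂ (LinearMap.range ((-F : X →L[ℂ] X) : X →ₗ[ℂ] X)) := by
      rw [hrange]; exact hF
    have hc' : Commute (T + F) (-F) := (hc.add_left (Commute.refl F)).neg_right
    have h := Stmt3Aux.gD_subset (T + F) (-F) hF' hc'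
    rwa [add_neg_cancel_right] at h
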